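/- arXiv:1607.07036 — 2 statements merged into one kernel-verified Lean document; each statement's English description precedes it below -/
import Mathlib

section
/- Let (X, ▷) be a finite rack with associated permutations f_y (f_y(x) = x ▷ y), and let Δ be a natural number. Define d⁺(v) := |{w ∈ X : w ≠ v ∧ ∃ y ∈ X, f_y(v) = w}|, and set S_{≤Δ} := {v ∈ X : d⁺(v) ≤ Δ} and S_{>Δ} := {v ∈ X : d⁺(v) > Δ}. Then both S_{≤Δ} and S_{>Δ} are subracks of (X, ▷): for all y, z ∈ S_{≤Δ} one has z ▷ y ∈ S_{≤Δ}, and for all y, z ∈ S_{>Δ} one has z ▷ y ∈ S_{>Δ}. -/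
/-!
Each right translation `f_y` is a rack automorphism (self-distributivity), so it maps the
out-neighbours of `z` bijectively onto those of `z ▷ y`. Hence `d⁺(z ▷ y) = d⁺(z)`, and any
set of vertices cut out by a condition on the out-degree is closed under `▷`.
-/

def IsRack {X : Type*} (op : X → X → X) : Prop :=
  (∀ y, Function.Bijective fun x => op x y) ∧
    ∀ x y z, op (op x y) z = op (op x z) (op y z)

def outNeighbors {X : Type*} (op : X → X → X) (v : X) : Set X :=
  {w | w ≠ v ∧ ∃ y, op v y = w}

namespace IsRack

variable {X : Type*} {op : X → X → X}

theorem image_outNeighbors (hrack : IsRack op) (y z : X) :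
    (fun x => op x y) '' outNeighbors op z = outNeighbors op (op z y) := by
  obtain ⟨hbij, hdist⟩ := hrack
  ext w
  constructor
  · rintro ⟨w, ⟨hne, u, rfl⟩, rfl⟩
    exact ⟨fun h => hne ((hbij y).1 h), op u y, (hdist z u y).symm⟩
  · rintro ⟨hne, u', rfl⟩
    obtain ⟨u, rfl⟩ := (hbij y).2 u'
    refine ⟨op z u, ⟨fun h => hne ?_, u, rfl⟩, hdist z u y⟩
    simp only [← hdist, h]

theorem ncard_outNeighbors_op (hrack : IsRack op) (y z : X) :
    (outNeighbors op (op z y)).ncard = (outNeighbors op z).ncard := by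
  rw [← hrack.image_outNeighbors, Set.ncard_image_of_injective _ (hrack.1 y).1]

end IsRack

theorem statement10_general {X : Type*} (op : X → X → X) (hrack : IsRack op)
    (Δ : ℕ) (d : X → ℕ)
    (hd : ∀ v, d v = Set.ncard {w | w ≠ v ∧ ∃ y : X, op v y = w}) :
    (∀ y z : X, d y ≤ Δ → d z ≤ Δ → d (op z y) ≤ Δ) ∧
      (∀ y z : X, Δ < d y → Δ < d z → Δ < d (op z y)) := by
  have hd_op : ∀ y z, d (op z y) = d z := fun y z => by
    rw [hd, hd]
    exact hrack.ncard_outNeighbors_op y z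
  exact ⟨fun y z _ hz => hd_op y z ▸ hz, fun y z _ hz => hd_op y z ▸ hz⟩

/-- Splitting a finite rack by out-degree in the reduced graph, at any threshold
`Δ`, yields two subracks: the sets of vertices of out-degree `≤ Δ` and of
out-degree `> Δ` are both closed under the rack operation. -/
theorem statement10 {X : Type*} [Finite X] (op : X → X → X) (hrack : IsRack op)
    (Δ : ℕ) (d : X → ℕ)
    (hd : ∀ v, d v = Set.ncard {w | w ≠ v ∧ ∃ y : X, op v y = w}) :
    (∀ y z : X, d y ≤ Δ → d z ≤ Δ → d (op z y) ≤ Δ) ∧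
      (∀ y z : X, Δ < d y → Δ < d z → Δ < d (op z y)) :=
  statement10_general op hrack Δ d hd
end

section
/- Let V be a finite set with |V| = n, let (σ_j)_{j ∈ S} be a family of permutations of V indexed by a finite set S, and let L be a positive integer with L < |S|. For T ⊆ S write cp(T) for the number of equivalence classes of the equivalence relation generated by the relation r_T(u, v) := (u ≠ v ∧ ∃ j ∈ T, σ_j(u) = v) (the number of components of the graph G_T). Then there exists T ⊆ S with |T| = L such that for every j ∈ S \ T one has cp(T) − cp(T ∪ {j}) ≤ n/(L+1); consequently, for every j ∈ S \ T, the number of components of G_T merged by the edges of colour j (components C such that there exist x ∈ C, y ∉ C with x ≠ y and σ_j(x) = y or σ_j(y) = x) is at most 2n/(L+1). -/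
/-!
Write `cp T` for the number of components of `G_T`. Adding the edges of one colour merges at least
as many classes of a finer partition as of a coarser one (this reduces to adding a single edge), so
the drop `cp T - cp (T ∪ {j})` can only shrink as `T` grows. Take `|T| = L` with `cp T` minimal and
let `d` be the drop at `j ∉ T`. Exchanging any `i ∈ T` for `j` cannot lower `cp`, which forces
removing `i` from `T` to raise `cp` by at least `d`; removing the elements of `T` one at a time then
gives `L d ≤ cp ∅ - cp T ≤ n - d`. A component of `G_T` merged by colour `j` lies in a fibre with at
least two elements of the map from the components of `G_T` onto those of `G_{T ∪ {j}}`, and there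
are at most `2 d` of those.
-/

open Function Finset Relation

theorem Nat.card_quot_eq_card_quotient_eqvGen {V : Type*} (r : V → V → Prop) :
    Nat.card (Quot r) = Nat.card (Quotient (EqvGen.setoid r)) :=
  Nat.card_congr
    { toFun := Quot.lift (Quotient.mk _) fun a b h => Quotient.sound (EqvGen.rel a b h)
      invFun := Quotient.lift (Quot.mk r) fun _ _ => Quot.eqvGen_sound
      left_inv := Quot.ind fun _ => rfl
      right_inv := Quotient.ind fun _ => rfl }

theorem ncard_nonsingleton_fibres_add_two_mul_le {A B : Type*} [Finite A] {φ : A → B}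
    (hφ : Surjective φ) :
    {x | ∃ y ≠ x, φ y = φ x}.ncard + 2 * Nat.card B ≤ 2 * Nat.card A := by
  classical
  have := Fintype.ofFinite A
  have : Finite B := .of_surjective φ hφ
  have := Fintype.ofFinite B
  set M := univ.filter fun x => ∃ y ≠ x, φ y = φ x
  have hfibre (b : B) : #(M.filter (φ · = b)) + 2 ≤ 2 * #(univ.filter (φ · = b)) := by
    obtain ⟨a, rfl⟩ := hφ b
    have hle : #(M.filter (φ · = φ a)) ≤ #(univ.filter (φ · = φ a)) :=
      card_le_card (filter_subset_filter _ (subset_univ M))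
    have hpos : 0 < #(univ.filter (φ · = φ a)) := card_pos.2 ⟨a, by simp⟩
    rcases (M.filter (φ · = φ a)).eq_empty_or_nonempty with hM | ⟨x, hx⟩
    · rw [hM, card_empty]; omega
    · obtain ⟨⟨y, hyx, hy⟩, hxa⟩ := by simpa [M] using hx
      have : 1 < #(univ.filter (φ · = φ a)) :=
        one_lt_card.2 ⟨x, by simpa using hxa, y, by simpa using hy.trans hxa, Ne.symm hyx⟩
      omega
  rw [Set.ncard_eq_toFinset_card', Nat.card_eq_fintype_card, Nat.card_eq_fintype_card,
    ← card_univ, ← card_univ (α := A), Set.toFinset_ofPred,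
    card_eq_sum_card_fiberwise (f := φ) (t := univ) fun _ _ => mem_univ _,
    card_eq_sum_card_fiberwise (s := univ) (f := φ) (t := univ) fun _ _ => mem_univ _,
    card_eq_sum_ones, mul_sum, mul_sum, ← sum_add_distrib]
  exact sum_le_sum fun b _ => by simpa using hfibre b

namespace Setoid

variable {V : Type*}

def edge (u v : V) : Setoid V := EqvGen.setoid fun x y => x = u ∧ y = v

theorem edge_le_iff {s : Setoid V} {u v : V} : edge u v ≤ s ↔ s u v :=
  ⟨fun h => h (EqvGen.rel _ _ ⟨rfl, rfl⟩),
    fun h => eqvGen_le <| by rintro x y ⟨rfl, rfl⟩; exact h⟩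

theorem iSup_edge (s : Setoid V) : ⨆ p ∈ {p : V × V | s p.1 p.2}, edge p.1 p.2 = s :=
  le_antisymm (iSup₂_le fun _ => edge_le_iff.2) fun x y h =>
    le_iSup₂ (f := fun p (_ : p ∈ {p : V × V | s p.1 p.2}) => edge p.1 p.2) (x, y) h
      (edge_le_iff.1 le_rfl)

theorem map_of_le_surjective {s t : Setoid V} (h : s ≤ t) : Surjective (map_of_le h) :=
  Quotient.ind fun x => ⟨Quotient.mk s x, rfl⟩

variable [Finite V] {s t : Setoid V}

theorem card_quotient_le_of_le (h : s ≤ t) : Nat.card (Quotient t) ≤ Nat.card (Quotient s) :=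
  Nat.card_le_card_of_surjective _ (map_of_le_surjective h)

theorem card_quotient_sup_edge_lt {u v : V} (h : ¬s u v) :
    Nat.card (Quotient (s ⊔ edge u v)) < Nat.card (Quotient s) := by
  have := Fintype.ofFinite (Quotient s)
  have := Fintype.ofFinite (Quotient (s ⊔ edge u v))
  rw [Nat.card_eq_fintype_card, Nat.card_eq_fintype_card]
  refine Fintype.card_lt_of_surjective_not_injective _ (map_of_le_surjective le_sup_left)
    fun hinj => h (Quotient.eq.1 (@hinj ⟦u⟧ ⟦v⟧ (Quotient.sound ?_)))
  exact (le_sup_right : edge u v ≤ s ⊔ edge u v) (edge_le_iff.1 le_rfl)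

theorem card_quotient_le_card_quotient_sup_edge_add_one (u v : V) :
    Nat.card (Quotient s) ≤ Nat.card (Quotient (s ⊔ edge u v)) + 1 := by
  classical
  -- Send the class of `v` to that of `u`: this is constant on the classes of `s ⊔ edge u v`
  -- and misses only the class of `v`.
  let g : V → Quotient s := fun x => if s x v then ⟦u⟧ else ⟦x⟧
  have hg : s ⊔ edge u v ≤ ker g := by
    refine sup_le (fun x y hxy => ?_) (edge_le_iff.2 (by simp [g]))
    show g x = g y
    simp only [g]
    split_ifs with hx hy hy
    · rfl
    · exact absurd (s.trans (s.symm hxy) hx) hy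
    · exact absurd (s.trans hxy hy) hx
    · exact Quotient.sound hxy
  rw [← Finite.card_option]
  refine Nat.card_le_card_of_surjective (fun o => o.elim ⟦v⟧ (Quotient.lift g @hg)) ?_
  rintro ⟨x⟩
  by_cases hx : s x v
  · exact ⟨none, Quotient.sound (s.symm hx)⟩
  · exact ⟨some ⟦x⟧, if_neg hx⟩

theorem card_quotient_add_card_quotient_sup_edge_le (h : s ≤ t) (u v : V) :
    Nat.card (Quotient t) + Nat.card (Quotient (s ⊔ edge u v)) ≤
      Nat.card (Quotient s) + Nat.card (Quotient (t ⊔ edge u v)) := by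
  by_cases htuv : t u v
  · rw [sup_eq_left.2 (edge_le_iff.2 htuv)]
    have := card_quotient_le_of_le (le_sup_left : s ≤ s ⊔ edge u v)
    omega
  · have := card_quotient_sup_edge_lt fun hsuv => htuv (h hsuv)
    have := card_quotient_le_card_quotient_sup_edge_add_one (s := t) u v
    omega

theorem card_quotient_add_card_quotient_sup_le (h : s ≤ t) (e : Setoid V) :
    Nat.card (Quotient t) + Nat.card (Quotient (s ⊔ e)) ≤
      Nat.card (Quotient s) + Nat.card (Quotient (t ⊔ e)) := by
  rw [← iSup_edge e]
  induction {p : V × V | e p.1 p.2}, Set.toFinite {p : V × V | e p.1 p.2}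
    using Set.Finite.induction_on with
  | empty => simp [add_comm]
  | @insert p E _ _ ih =>
    rw [_root_.iSup_insert, sup_comm (edge _ _), ← sup_assoc, ← sup_assoc]
    have := card_quotient_add_card_quotient_sup_edge_le
      (sup_le_sup_right h (⨆ q ∈ E, edge q.1 q.2)) p.1 p.2
    omega

theorem ncard_split_classes_add_two_mul_le (h : s ≤ t) :
    {C : Set V | (∃ a, C = {b | s a b}) ∧ ∃ x ∈ C, ∃ y ∉ C, t x y}.ncard +
      2 * Nat.card (Quotient t) ≤ 2 * Nat.card (Quotient s) := by
  refine le_trans (Nat.add_le_add_right ?_ _)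
    (ncard_nonsingleton_fibres_add_two_mul_le (map_of_le_surjective h))
  calc _ ≤ ((fun q => Quotient.mk s ⁻¹' {q}) ''
          {q | ∃ q' ≠ q, map_of_le h q' = map_of_le h q}).ncard := Set.ncard_le_ncard ?_
    _ ≤ _ := Set.ncard_image_le (Set.toFinite _)
  rintro _ ⟨⟨a, rfl⟩, x, hax, y, hay, hxy⟩
  refine ⟨⟦a⟧, ⟨⟦y⟧, fun hya => hay (s.symm (Quotient.eq.1 hya)), Quotient.sound ?_⟩, ?_⟩
  · exact t.trans (t.symm hxy) (t.symm (h hax))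
  · ext b
    exact Quotient.eq.trans ⟨s.symm, s.symm⟩

end Setoid

section DiminishingDrops

variable {S : Type*} [DecidableEq S] {f : Finset S → ℕ}

theorem card_mul_add_le_of_forall_erase
    (hf : ∀ ⦃A B⦄, A ⊆ B → ∀ j, f B + f (insert j A) ≤ f A + f (insert j B))
    {T U : Finset S} {d : ℤ} (hd : ∀ i ∈ T, d + f T ≤ f (T.erase i)) (hU : U ⊆ T) :
    #U * d + f T ≤ f (T \ U) := by
  induction U using Finset.induction_on with
  | empty => simp
  | @insert i U hiU ih =>
    have hiT : i ∈ T := hU (mem_insert_self i U)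
    have hsub : T \ insert i U ⊆ T.erase i := fun x hx => by
      simp only [mem_sdiff, mem_insert, not_or, mem_erase] at hx ⊢
      exact ⟨hx.2.1, hx.1⟩
    have hins : insert i (T \ insert i U) = T \ U := by
      ext x; by_cases hx : x = i <;> simp [hx, hiT, hiU]
    have := hf hsub i
    rw [hins, insert_erase hiT] at this
    have := ih ((subset_insert i U).trans hU)
    have := hd i hiT
    rw [card_insert_of_notMem hiU]
    push_cast
    linarith

theorem exists_card_eq_forall_mul_sub_insert_le [Fintype S]
    (hf : ∀ ⦃A B⦄, A ⊆ B → ∀ j, f B + f (insert j A) ≤ f A + f (insert j B))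
    {L : ℕ} (hL : L ≤ Fintype.card S) :
    ∃ T : Finset S, #T = L ∧ ∀ j ∉ T, (L + 1) * ((f T : ℤ) - f (insert j T)) ≤ f ∅ := by
  obtain ⟨T, hT, hmin⟩ := exists_min_image (powersetCard L univ) f
    (powersetCard_nonempty.2 (by simpa using hL))
  have hTcard : #T = L := (mem_powersetCard.1 hT).2
  refine ⟨T, hTcard, fun j hj => ?_⟩
  have hd : ∀ i ∈ T, ((f T : ℤ) - f (insert j T)) + f T ≤ f (T.erase i) := by
    intro i hi
    have hexch : f T ≤ f (insert j (T.erase i)) := hmin _ <| mem_powersetCard.2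
      ⟨subset_univ _, by
        rw [card_insert_of_notMem fun h => hj (mem_of_mem_erase h), card_erase_add_one hi, hTcard]⟩
    have := hf (erase_subset i T) j
    linarith
  have := card_mul_add_le_of_forall_erase hf hd Subset.rfl
  rw [sdiff_self, bot_eq_empty, hTcard] at this
  linarith [(f (insert j T)).cast_nonneg (α := ℤ)]

end DiminishingDrops

section Colours

variable {V S : Type*} (σ : S → Equiv.Perm V)

def edgeRel (T : Finset S) (u v : V) : Prop := u ≠ v ∧ ∃ i ∈ T, σ i u = v

def componentSetoid (T : Finset S) : Setoid V := EqvGen.setoid (edgeRel σ T)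

noncomputable def numComponents (T : Finset S) : ℕ := Nat.card (Quot (edgeRel σ T))

theorem numComponents_eq_card_quotient (T : Finset S) :
    numComponents σ T = Nat.card (Quotient (componentSetoid σ T)) :=
  Nat.card_quot_eq_card_quotient_eqvGen _

theorem componentSetoid_mono {T T' : Finset S} (h : T ⊆ T') :
    componentSetoid σ T ≤ componentSetoid σ T' :=
  Setoid.eqvGen_mono fun _ _ ⟨hne, i, hi, hσ⟩ => ⟨hne, i, h hi, hσ⟩

theorem numComponents_le_card [Finite V] (T : Finset S) : numComponents σ T ≤ Nat.card V :=
  Nat.card_le_card_of_surjective _ Quot.mk_surjective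

variable [DecidableEq S]

theorem componentSetoid_insert (j : S) (T : Finset S) :
    componentSetoid σ (insert j T) = componentSetoid σ T ⊔ componentSetoid σ {j} := by
  refine le_antisymm (Setoid.eqvGen_le ?_)
    (sup_le (componentSetoid_mono σ (subset_insert j T))
      (componentSetoid_mono σ (singleton_subset_iff.2 (mem_insert_self j T))))
  rintro x y ⟨hne, i, hi, hσ⟩
  rcases mem_insert.1 hi with rfl | hi
  · exact (le_sup_right : componentSetoid σ {i} ≤ _)
      (EqvGen.rel _ _ ⟨hne, i, mem_singleton_self i, hσ⟩)
  · exact (le_sup_left : componentSetoid σ T ≤ _) (EqvGen.rel _ _ ⟨hne, i, hi, hσ⟩)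

theorem numComponents_add_numComponents_insert_le [Finite V] {A B : Finset S} (h : A ⊆ B)
    (j : S) :
    numComponents σ B + numComponents σ (insert j A) ≤
      numComponents σ A + numComponents σ (insert j B) := by
  simp only [numComponents_eq_card_quotient, componentSetoid_insert]
  exact Setoid.card_quotient_add_card_quotient_sup_le (componentSetoid_mono σ h) _

theorem ncard_merged_add_two_mul_le [Finite V] (j : S) (T : Finset S) :
    {C : Set V | (∃ a, C = {b | EqvGen (edgeRel σ T) a b}) ∧
        ∃ x ∈ C, ∃ y, y ∉ C ∧ x ≠ y ∧ (σ j x = y ∨ σ j y = x)}.ncard +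
      2 * numComponents σ (insert j T) ≤ 2 * numComponents σ T := by
  simp only [numComponents_eq_card_quotient]
  refine le_trans (Nat.add_le_add_right (Set.ncard_le_ncard ?_ (Set.toFinite _)) _)
    (Setoid.ncard_split_classes_add_two_mul_le (componentSetoid_mono σ (subset_insert j T)))
  rintro C ⟨hC, x, hx, y, hy, hxy, hσ⟩
  refine ⟨hC, x, hx, y, hy, ?_⟩
  have hj := mem_insert_self j T
  rcases hσ with hσ | hσ
  · exact EqvGen.rel _ _ ⟨hxy, j, hj, hσ⟩
  · exact EqvGen.symm _ _ (EqvGen.rel _ _ ⟨hxy.symm, j, hj, hσ⟩)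

end Colours

theorem statement11_general {V : Type*} [Fintype V] {S : Type*} [Fintype S] [DecidableEq S]
    (n : ℕ) (hV : Fintype.card V = n) (σ : S → Equiv.Perm V)
    (L : ℕ) (hLS : L < Fintype.card S) :
    ∃ T : Finset S, T.card = L ∧ ∀ j : S, j ∉ T →
      ((Nat.card (Quot fun u v : V => u ≠ v ∧ ∃ i ∈ T, σ i u = v) : ℝ) -
          (Nat.card (Quot fun u v : V => u ≠ v ∧ ∃ i ∈ insert j T, σ i u = v) : ℝ) ≤
        (n : ℝ) / (L + 1)) ∧
      (({C : Set V |
            (∃ a, C = {b | Relation.EqvGen (fun u v => u ≠ v ∧ ∃ i ∈ T, σ i u = v) a b}) ∧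
            ∃ x ∈ C, ∃ y, y ∉ C ∧ x ≠ y ∧ (σ j x = y ∨ σ j y = x)}).ncard : ℝ) ≤
        2 * (n : ℝ) / (L + 1) := by
  obtain ⟨T, hTcard, hT⟩ :=
    exists_card_eq_forall_mul_sub_insert_le
      (fun _ _ => numComponents_add_numComponents_insert_le σ) hLS.le
  refine ⟨T, hTcard, fun j hj => ?_⟩
  have hn : numComponents σ ∅ ≤ n := by simpa [hV] using numComponents_le_card σ ∅
  have hdrop : ((L : ℝ) + 1) * (numComponents σ T - numComponents σ (insert j T)) ≤ n := by
    exact_mod_cast (hT j hj).trans (Int.ofNat_le.2 hn)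
  have hpos : (0 : ℝ) < L + 1 := by positivity
  constructor
  · show (numComponents σ T : ℝ) - numComponents σ (insert j T) ≤ n / (L + 1)
    rw [le_div_iff₀ hpos]
    linarith
  · have hmerged (m : ℕ) (hm : m + 2 * numComponents σ (insert j T) ≤ 2 * numComponents σ T) :
        (m : ℝ) * (L + 1) ≤ 2 * n := by
      have := (Nat.cast_le (α := ℝ)).2 hm
      push_cast at this
      nlinarith
    exact (le_div_iff₀ hpos).2 (hmerged _ (ncard_merged_add_two_mul_le σ j T))

/-- Greedy choice of colours: given permutations `(σ_j)_{j ∈ S}` of a finite set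
`V` of size `n` and `0 < L < |S|`, there is an `L`-element set `T ⊆ S` of
colours such that adding any further colour `j ∈ S \ T` decreases the number of
components of `G_T` by at most `n / (L + 1)`; consequently the number of
components of `G_T` merged by the edges of colour `j` is at most
`2n / (L + 1)`. -/
theorem statement11 {V : Type*} [Fintype V] {S : Type*} [Fintype S] [DecidableEq S]
    (n : ℕ) (hV : Fintype.card V = n) (σ : S → Equiv.Perm V)
    (L : ℕ) (hL : 0 < L) (hLS : L < Fintype.card S) :
    ∃ T : Finset S, T.card = L ∧ ∀ j : S, j ∉ T →
      ((Nat.card (Quot fun u v : V => u ≠ v ∧ ∃ i ∈ T, σ i u = v) : ℝ) -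
          (Nat.card (Quot fun u v : V => u ≠ v ∧ ∃ i ∈ insert j T, σ i u = v) : ℝ) ≤
        (n : ℝ) / (L + 1)) ∧
      (({C : Set V |
            (∃ a, C = {b | Relation.EqvGen (fun u v => u ≠ v ∧ ∃ i ∈ T, σ i u = v) a b}) ∧
            ∃ x ∈ C, ∃ y, y ∉ C ∧ x ≠ y ∧ (σ j x = y ∨ σ j y = x)}).ncard : ℝ) ≤
        2 * (n : ℝ) / (L + 1) :=
  statement11_general n hV σ L hLS
end
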